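/- arXiv:1511.07467 — 2 statements merged into one kernel-verified Lean document; each statement's English description precedes it below -/
import Mathlib

section
/- For the equation of state p(ρ) = ρ^γ with γ > 1 and the constitutive relations s = (ρ+p)/n and s = dρ/dn, the function ρ(n) = n(1 − n^{γ−1})^{1/(1−γ)} satisfies both relations, i.e., with p = ρ(n)^γ one has n ρ'(n) = ρ(n) + p(n) for n ∈ (0,1). -/
open Real

/-- for p(ρ) = ρ^γ, γ > 1, the density profile
ρ(n) = n (1 − n^{γ−1})^{1/(1−γ)} satisfies n ρ'(n) = ρ(n) + ρ(n)^γ on (0,1). -/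
theorem density_enthalpy_relation (γ : ℝ) (hγ : 1 < γ) :
    ∀ n ∈ Set.Ioo (0 : ℝ) 1,
      n * deriv (fun m : ℝ => m * (1 - m ^ (γ - 1)) ^ ((1 : ℝ) / (1 - γ))) n
        = n * (1 - n ^ (γ - 1)) ^ ((1 : ℝ) / (1 - γ)) +
          (n * (1 - n ^ (γ - 1)) ^ ((1 : ℝ) / (1 - γ))) ^ γ := by
  rintro n ⟨hn0, hn1⟩
  set e : ℝ := (1 : ℝ) / (1 - γ) with he
  set u : ℝ := 1 - n ^ (γ - 1) with hu
  have hγ1 : (0:ℝ) < γ - 1 := by linarith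
  have hγne : (1 : ℝ) - γ ≠ 0 := by linarith
  have hupos : 0 < u := by
    have : n ^ (γ - 1) < 1 ^ (γ - 1) :=
      Real.rpow_lt_rpow (le_of_lt hn0) hn1 hγ1
    simpa [hu, Real.one_rpow] using sub_pos.mpr this
  have hune : u ≠ 0 := ne_of_gt hupos
  -- derivative of inner m ^ (γ-1)
  have h1 : HasDerivAt (fun m : ℝ => m ^ (γ - 1)) ((γ - 1) * n ^ (γ - 1 - 1)) n :=
    Real.hasDerivAt_rpow_const (Or.inl (ne_of_gt hn0))
  have h2 : HasDerivAt (fun m : ℝ => 1 - m ^ (γ - 1)) (-((γ - 1) * n ^ (γ - 1 - 1))) n := by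
    exact ((hasDerivAt_const n (1:ℝ)).sub h1).congr_deriv (by ring)
  have h3 : HasDerivAt (fun m : ℝ => (1 - m ^ (γ - 1)) ^ e)
      (e * u ^ (e - 1) * -((γ - 1) * n ^ (γ - 1 - 1))) n := by
    have := h2.rpow_const (p := e) (Or.inl hune)
    convert this using 1
    ring
  have h4 : HasDerivAt (fun m : ℝ => m * (1 - m ^ (γ - 1)) ^ e)
      (1 * u ^ e + n * (e * u ^ (e - 1) * -((γ - 1) * n ^ (γ - 1 - 1)))) n :=
    (hasDerivAt_id n).mul h3
  rw [h4.deriv]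
  -- algebraic facts
  have he1 : e * (γ - 1) = -1 := by
    rw [he, div_mul_eq_mul_div, one_mul, div_eq_iff hγne]; ring
  have he2 : e - 1 = e * γ := by
    rw [he, div_sub_one hγne, div_mul_eq_mul_div, one_mul]; ring
  have ha : n ^ (γ - 1) = n * n ^ (γ - 1 - 1) := by
    rw [show γ - 1 = 1 + (γ - 1 - 1) by ring, Real.rpow_add hn0, Real.rpow_one]
    congr 1
    ring
  have hnγ : n * (n * n ^ (γ - 1 - 1)) = n ^ γ := by
    rw [← ha, show γ = 1 + (γ - 1) by ring, Real.rpow_add hn0, Real.rpow_one]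
    congr 1
    ring
  have hpow : (n * u ^ e) ^ γ = n ^ γ * u ^ (e * γ) := by
    rw [Real.mul_rpow (le_of_lt hn0) (le_of_lt (Real.rpow_pos_of_pos hupos e)),
      ← Real.rpow_mul (le_of_lt hupos)]
  rw [hpow, ← he2]
  have : n * (1 * u ^ e + n * (e * u ^ (e - 1) * -((γ - 1) * n ^ (γ - 1 - 1))))
      = n * u ^ e + (-(e * (γ - 1))) * (n * (n * n ^ (γ - 1 - 1))) * u ^ (e - 1) := by ring
  rw [this, he1, hnγ]
  ring
end

section
/- For the equation of state p(ρ) = ρ^γ, γ > 1, with ρ(n) = n(1 − n^{γ−1})^{1/(1−γ)}, the squared sound speed satisfies c_s^2 = γ n^{γ−1}/(1 − n^{γ−1}), and the constraint 0 ≤ c_s^2 < 1 is equivalent to 0 ≤ n^{γ−1} < 1/(γ+1). -/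
open Real

/-- for p(ρ) = ρ^γ, γ > 1, with ρ(n) = n (1 − n^{γ−1})^{1/(1−γ)},
the squared sound speed c_s² = γ ρ^{γ−1} equals γ n^{γ−1}/(1 − n^{γ−1}), and
0 ≤ c_s² < 1 is equivalent to 0 ≤ n^{γ−1} < 1/(γ+1). -/
theorem sound_speed_gamma (γ : ℝ) (hγ : 1 < γ) :
    ∀ n ∈ Set.Ico (0 : ℝ) 1,
      γ * (n * (1 - n ^ (γ - 1)) ^ ((1 : ℝ) / (1 - γ))) ^ (γ - 1)
          = γ * n ^ (γ - 1) / (1 - n ^ (γ - 1)) ∧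
      ((0 ≤ γ * n ^ (γ - 1) / (1 - n ^ (γ - 1)) ∧
          γ * n ^ (γ - 1) / (1 - n ^ (γ - 1)) < 1) ↔
        (0 ≤ n ^ (γ - 1) ∧ n ^ (γ - 1) < 1 / (γ + 1))) := by
  rintro n ⟨hn0, hn1⟩
  have hγ1 : 0 < γ - 1 := by linarith
  have hx0 : 0 ≤ n ^ (γ - 1) := Real.rpow_nonneg hn0 _
  have hx1 : n ^ (γ - 1) < 1 := Real.rpow_lt_one hn0 hn1 hγ1
  set x := n ^ (γ - 1) with hxdef
  have hpos : 0 < 1 - x := by linarith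
  constructor
  · have h1 : (n * (1 - x) ^ ((1 : ℝ) / (1 - γ))) ^ (γ - 1)
        = n ^ (γ - 1) * ((1 - x) ^ ((1 : ℝ) / (1 - γ))) ^ (γ - 1) :=
      Real.mul_rpow hn0 (Real.rpow_nonneg hpos.le _)
    have h2 : ((1 - x) ^ ((1 : ℝ) / (1 - γ))) ^ (γ - 1)
        = (1 - x) ^ ((1 : ℝ) / (1 - γ) * (γ - 1)) :=
      (Real.rpow_mul hpos.le _ _).symm
    have h3 : (1 : ℝ) / (1 - γ) * (γ - 1) = -1 := by
      have hne : (1 : ℝ) - γ ≠ 0 := by linarith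
      field_simp
      ring
    rw [h1, h2, h3, Real.rpow_neg_one]
    field_simp
    exact hxdef.symm
  · have hγ0 : 0 < γ := by linarith
    constructor
    · rintro ⟨_, hlt⟩
      refine ⟨hx0, ?_⟩
      have h : γ * x < 1 - x := (div_lt_one hpos).mp hlt
      rw [lt_div_iff₀ (by linarith : (0:ℝ) < γ + 1)]
      nlinarith
    · rintro ⟨_, hlt⟩
      have h : x * (γ + 1) < 1 := by
        rw [lt_div_iff₀ (by linarith)] at hlt
        linarith
      constructor
      · positivity
      · rw [div_lt_one hpos]
        nlinarith
end
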